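/- arXiv:1002.2971 — 2 statements merged into one kernel-verified Lean document; each statement's English description precedes it below -/
import Mathlib

section
/- Let X be uniform on {+,−}, and let X1, ..., Xn (n > 3) be erased versions of X with I(Xi; Xj) = 0 for all i ≠ j. Then Σ_{i=1}^n P(Xi = 0) ≥ n − 2. -/
open MeasureTheory

/-- Shannon entropy (base 2) of a finite-alphabet random variable. -/
noncomputable def entropy {Ω : Type*} [MeasurableSpace Ω] {α : Type*} [Fintype α]
    (μ : Measure Ω) (X : Ω → α) : ℝ :=
  -∑ a : α, (μ (X ⁻¹' {a})).toReal * Real.logb 2 (μ (X ⁻¹' {a})).toReal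

instance : MeasurableSpace (Option Bool) := ⊤
instance : MeasurableSingletonClass (Option Bool) := ⟨fun _ => trivial⟩

/-! Zero mutual information is zero Kullback–Leibler divergence of the joint law of `(Xᵢ, Xⱼ)`
from the product of its marginals, so every pair of fibres of `Xᵢ` and `Xⱼ` is independent.
Thus for each sign `b` the events `{Xᵢ = b}` are pairwise independent and contained, up to null
sets, in `{X = b}`, an event `E` of probability `p = 1/2`. Expanding
`∫ (∑ᵢ 1_{Xᵢ = b} - c 1_E)² ≥ 0` with `c = s / p`, where `s = ∑ᵢ P(Xᵢ = b)`, gives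
`s (1 - p) ≤ p`, i.e. `s ≤ 1`. Since `P(Xᵢ = 0) = 1 - P(Xᵢ = +) - P(Xᵢ = −)`, summing over `i`
gives the bound. -/

open Real InformationTheory

lemma mul_klFun_div_mul {p x y : ℝ} (hp : 0 ≤ p) (hx : p ≤ x) (hy : p ≤ y) :
    x * y * klFun (p / (x * y)) = p * log p - p * log x - p * log y + x * y - p := by
  rcases hp.eq_or_lt with rfl | hp
  · simp [klFun_zero]
  have hx0 : x ≠ 0 := (hp.trans_le hx).ne'
  have hy0 : y ≠ 0 := (hp.trans_le hy).ne'
  rw [klFun_apply, log_div hp.ne' (mul_ne_zero hx0 hy0), log_mul hx0 hy0]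
  field_simp
  ring

section FiniteValued

variable {Ω α β : Type*} [MeasurableSpace Ω] {μ : Measure Ω} [Fintype α] [Fintype β]
  {X : Ω → α} {Y : Ω → β}

noncomputable def mutualInfo (μ : Measure Ω) (X : Ω → α) (Y : Ω → β) : ℝ :=
  entropy μ X + entropy μ Y - entropy μ (fun ω => (X ω, Y ω))

lemma sum_measureReal_preimage_singleton_inter [IsFiniteMeasure μ]
    (hY : ∀ b, MeasurableSet (Y ⁻¹' {b})) (s : Set Ω) :
    ∑ b, μ.real (Y ⁻¹' {b} ∩ s) = μ.real s := by
  simp_rw [← measureReal_restrict_apply (hY _)]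
  rw [sum_measureReal_preimage_singleton _ fun b _ => hY b, Finset.coe_univ,
    Set.preimage_univ, measureReal_restrict_apply_univ]

lemma sum_measureReal_preimage_singleton_eq_one [IsProbabilityMeasure μ]
    (hX : ∀ a, MeasurableSet (X ⁻¹' {a})) : ∑ a, μ.real (X ⁻¹' {a}) = 1 := by
  simpa using sum_measureReal_preimage_singleton_inter (μ := μ) hX Set.univ

lemma mutualInfo_eq_sum_klFun [IsProbabilityMeasure μ]
    (hX : ∀ a, MeasurableSet (X ⁻¹' {a})) (hY : ∀ b, MeasurableSet (Y ⁻¹' {b})) :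
    mutualInfo μ X Y = (∑ a, ∑ b, μ.real (X ⁻¹' {a}) * μ.real (Y ⁻¹' {b}) *
      klFun (μ.real (X ⁻¹' {a} ∩ Y ⁻¹' {b}) / (μ.real (X ⁻¹' {a}) * μ.real (Y ⁻¹' {b})))) /
      log 2 := by
  have hpair : ∀ p : α × β, (fun ω => (X ω, Y ω)) ⁻¹' {p} = X ⁻¹' {p.1} ∩ Y ⁻¹' {p.2} := by
    intro p; ext ω; simp [Prod.ext_iff]
  have hmargX : ∀ a, ∑ b, μ.real (X ⁻¹' {a} ∩ Y ⁻¹' {b}) = μ.real (X ⁻¹' {a}) := fun a => by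
    simp_rw [Set.inter_comm (X ⁻¹' {a})]
    exact sum_measureReal_preimage_singleton_inter hY _
  have hmargY : ∀ b, ∑ a, μ.real (X ⁻¹' {a} ∩ Y ⁻¹' {b}) = μ.real (Y ⁻¹' {b}) :=
    fun b => sum_measureReal_preimage_singleton_inter hX _
  have hterm : ∀ a b, μ.real (X ⁻¹' {a}) * μ.real (Y ⁻¹' {b}) *
      klFun (μ.real (X ⁻¹' {a} ∩ Y ⁻¹' {b}) / (μ.real (X ⁻¹' {a}) * μ.real (Y ⁻¹' {b}))) = _ :=
    fun a b => mul_klFun_div_mul measureReal_nonneg (measureReal_mono Set.inter_subset_left)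
      (measureReal_mono Set.inter_subset_right)
  rw [eq_div_iff (log_pos one_lt_two).ne']
  simp only [hterm, Finset.sum_add_distrib, Finset.sum_sub_distrib, ← Finset.sum_mul, hmargX,
    ← Finset.mul_sum, sum_measureReal_preimage_singleton_eq_one hX,
    sum_measureReal_preimage_singleton_eq_one hY]
  rw [Finset.sum_comm
    (f := fun a b => μ.real (X ⁻¹' {a} ∩ Y ⁻¹' {b}) * log (μ.real (Y ⁻¹' {b})))]
  simp only [← Finset.sum_mul, hmargY]
  simp only [mutualInfo, entropy, hpair, Fintype.sum_prod_type, logb, ← measureReal_def]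
  simp only [← mul_div_assoc, ← Finset.sum_div]
  field_simp
  ring

lemma measureReal_inter_preimage_eq_mul_of_mutualInfo_eq_zero [IsProbabilityMeasure μ]
    (hX : ∀ a, MeasurableSet (X ⁻¹' {a})) (hY : ∀ b, MeasurableSet (Y ⁻¹' {b}))
    (h : mutualInfo μ X Y = 0) (a : α) (b : β) :
    μ.real (X ⁻¹' {a} ∩ Y ⁻¹' {b}) = μ.real (X ⁻¹' {a}) * μ.real (Y ⁻¹' {b}) := by
  have hnonneg : ∀ a b, 0 ≤ μ.real (X ⁻¹' {a}) * μ.real (Y ⁻¹' {b}) *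
      klFun (μ.real (X ⁻¹' {a} ∩ Y ⁻¹' {b}) / (μ.real (X ⁻¹' {a}) * μ.real (Y ⁻¹' {b}))) :=
    fun a b => mul_nonneg (by positivity) (klFun_nonneg (by positivity))
  rw [mutualInfo_eq_sum_klFun hX hY, div_eq_zero_iff, or_iff_left (log_pos one_lt_two).ne',
    Finset.sum_eq_zero_iff_of_nonneg fun a _ => Finset.sum_nonneg fun b _ => hnonneg a b] at h
  have hab := (Finset.sum_eq_zero_iff_of_nonneg fun b _ => hnonneg a b).1
    (h a (Finset.mem_univ a)) b (Finset.mem_univ b)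
  rcases mul_eq_zero.1 hab with hq | hkl
  · rw [hq]
    rcases mul_eq_zero.1 hq with hx | hy
    · exact measureReal_mono_null Set.inter_subset_left hx
    · exact measureReal_mono_null Set.inter_subset_right hy
  · rw [klFun_eq_zero_iff (by positivity)] at hkl
    exact (div_eq_one_iff_eq fun hq => by simp [hq] at hkl).1 hkl

end FiniteValued

section Events

variable {Ω ι : Type*} [MeasurableSpace Ω] {μ : Measure Ω} [Fintype ι]
  {A : ι → Set Ω} {E : Set Ω}

lemma two_mul_mul_sum_measureReal_le [IsFiniteMeasure μ] (hA : ∀ i, MeasurableSet (A i))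
    (hE : MeasurableSet E) (hAE : ∀ i, μ (A i \ E) = 0) (c : ℝ) :
    2 * c * ∑ i, μ.real (A i) ≤ ∑ i, ∑ j, μ.real (A i ∩ A j) + c ^ 2 * μ.real E := by
  have hself : ∀ ω, E.indicator (1 : Ω → ℝ) ω * E.indicator 1 ω = E.indicator 1 ω := fun ω => by
    rw [← Pi.mul_apply, ← Set.inter_indicator_one, Set.inter_self]
  have hexpand : ∀ ω, (∑ i, (A i).indicator (1 : Ω → ℝ) ω - c * E.indicator 1 ω) ^ 2 =
      ∑ i, ∑ j, (A i ∩ A j).indicator 1 ω - 2 * c * ∑ i, (A i ∩ E).indicator 1 ω +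
        c ^ 2 * E.indicator 1 ω := fun ω => by
    simp only [Set.inter_indicator_one, Pi.mul_apply]
    rw [← Finset.sum_mul_sum, ← Finset.sum_mul]
    linear_combination c ^ 2 * hself ω
  have hAE' : ∀ i, μ.real (A i ∩ E) = μ.real (A i) := fun i => by
    simp [measureReal_def, measure_inter_conull' (hAE i)]
  have hint : ∀ s, MeasurableSet s → Integrable (s.indicator (1 : Ω → ℝ)) μ :=
    fun s hs => (integrable_const 1).indicator hs
  have hsq : 0 ≤ ∫ ω, (∑ i, (A i).indicator (1 : Ω → ℝ) ω - c * E.indicator 1 ω) ^ 2 ∂μ :=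
    integral_nonneg fun ω => sq_nonneg _
  simp only [hexpand] at hsq
  rw [integral_add, integral_sub, integral_const_mul, integral_const_mul, integral_finsetSum,
    integral_finsetSum, Finset.sum_congr rfl fun i _ => integral_finsetSum _ fun j _ =>
      hint _ ((hA i).inter (hA j))] at hsq
  · simp only [integral_indicator_one, hA, hE, MeasurableSet.inter, hAE'] at hsq
    linarith
  all_goals intros; fun_prop (disch := measurability)

lemma sum_sum_measureReal_inter_le
    (hindep : ∀ i j, i ≠ j → μ.real (A i ∩ A j) = μ.real (A i) * μ.real (A j)) :
    ∑ i, ∑ j, μ.real (A i ∩ A j) ≤ ∑ i, μ.real (A i) + (∑ i, μ.real (A i)) ^ 2 := by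
  classical
  have hle : ∀ i j, μ.real (A i ∩ A j) ≤
      (if i = j then μ.real (A i) else 0) + μ.real (A i) * μ.real (A j) := fun i j => by
    by_cases hij : i = j
    · subst hij
      rw [if_pos rfl, Set.inter_self]
      exact le_add_of_nonneg_right (mul_self_nonneg _)
    · simp [hij, hindep i j hij]
  calc ∑ i, ∑ j, μ.real (A i ∩ A j)
      ≤ ∑ i, ∑ j, ((if i = j then μ.real (A i) else 0) + μ.real (A i) * μ.real (A j)) :=
        Finset.sum_le_sum fun i _ => Finset.sum_le_sum fun j _ => hle i j
    _ = ∑ i, μ.real (A i) + (∑ i, μ.real (A i)) ^ 2 := by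
        simp [Finset.sum_add_distrib, sq, Finset.sum_mul_sum]

lemma sum_measureReal_mul_one_sub_le [IsFiniteMeasure μ] (hA : ∀ i, MeasurableSet (A i))
    (hE : MeasurableSet E) (hAE : ∀ i, μ (A i \ E) = 0)
    (hindep : ∀ i j, i ≠ j → μ.real (A i ∩ A j) = μ.real (A i) * μ.real (A j)) :
    (∑ i, μ.real (A i)) * (1 - μ.real E) ≤ μ.real E := by
  have hpairs := sum_sum_measureReal_inter_le hindep
  have hquad := two_mul_mul_sum_measureReal_le hA hE hAE
  set s := ∑ i, μ.real (A i)
  set p := μ.real E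
  have hs : 0 ≤ s := Finset.sum_nonneg fun i _ => measureReal_nonneg
  rcases (measureReal_nonneg : 0 ≤ p).eq_or_lt with hp | hp
  · nlinarith [hquad (s + 1)]
  · set c := s / p
    have hc : c * p = s := div_mul_cancel₀ s hp.ne'
    have hcs : c * s ≤ s + s ^ 2 := by
      have : c ^ 2 * p = c * s := by rw [sq, mul_assoc, hc]
      linarith [hquad c]
    have hs2 : s ^ 2 ≤ p * (s + s ^ 2) := calc
      s ^ 2 = p * (c * s) := by rw [← hc]; ring
      _ ≤ p * (s + s ^ 2) := mul_le_mul_of_nonneg_left hcs hp.le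
    rcases hs.eq_or_lt with hs0 | hs0
    · rw [← hs0]; linarith
    · nlinarith

end Events

theorem stmt_11_general {Ω : Type*} [MeasurableSpace Ω] (μ : Measure Ω) [IsProbabilityMeasure μ]
    (n : ℕ)
    (X : Ω → Bool) (hX : Measurable X) (hunif : μ {ω | X ω = true} = 1/2)
    (Xe : Fin n → Ω → Option Bool) (hXe : ∀ i, Measurable (Xe i))
    (herased : ∀ i, μ {ω | Xe i ω = some true ∧ X ω = false} = 0 ∧
      μ {ω | Xe i ω = some false ∧ X ω = true} = 0)
    (hindep : ∀ i j, i ≠ j →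
      entropy μ (Xe i) + entropy μ (Xe j) - entropy μ (fun ω => (Xe i ω, Xe j ω)) = 0) :
    (n : ℝ) - 2 ≤ ∑ i, (μ {ω | Xe i ω = none}).toReal := by
  have hfiber : ∀ i v, MeasurableSet (Xe i ⁻¹' {v}) := fun i v =>
    hXe i (measurableSet_singleton v)
  have hhalf : ∀ b, μ.real (X ⁻¹' {b}) = 1 / 2 := by
    have htrue : μ.real (X ⁻¹' {true}) = 1 / 2 := by simp [measureReal_def, Set.preimage, hunif]
    have htotal := sum_measureReal_preimage_singleton_eq_one (μ := μ)
      fun b => hX (measurableSet_singleton b)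
    rw [Fintype.sum_bool] at htotal
    intro b; cases b <;> linarith
  have hconsistent : ∀ i b, μ (Xe i ⁻¹' {some b} \ X ⁻¹' {b}) = 0 := by
    intro i b
    cases b
    · convert (herased i).2 using 2; ext ω; simp
    · convert (herased i).1 using 2; ext ω; simp
  have hsome : ∀ b, ∑ i, μ.real (Xe i ⁻¹' {some b}) ≤ 1 := fun b => by
    have hbound := sum_measureReal_mul_one_sub_le (fun i => hfiber i (some b))
      (hX (measurableSet_singleton b)) (fun i => hconsistent i b) fun i j hij =>
        measureReal_inter_preimage_eq_mul_of_mutualInfo_eq_zero (hfiber i) (hfiber j)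
          (hindep i j hij) (some b) (some b)
    rw [hhalf] at hbound
    linarith
  have hnone : ∀ i, μ.real (Xe i ⁻¹' {none}) =
      1 - μ.real (Xe i ⁻¹' {some true}) - μ.real (Xe i ⁻¹' {some false}) := fun i => by
    have htotal := sum_measureReal_preimage_singleton_eq_one (μ := μ) (hfiber i)
    rw [Fintype.sum_option, Fintype.sum_bool] at htotal
    linarith
  change (n : ℝ) - 2 ≤ ∑ i, μ.real (Xe i ⁻¹' {none})
  simp only [hnone, Finset.sum_sub_distrib, Finset.sum_const, Finset.card_univ, Fintype.card_fin,
    nsmul_eq_mul, mul_one]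
  linarith [hsome true, hsome false]

/-- Lemma `cases_n_k=2`: `X` uniform on `{+,−}` (`Bool`, `true = +`), `X₁,…,Xₙ` (`n > 3`)
erased versions of `X` with pairwise mutual information `I(Xᵢ;Xⱼ) = 0` for `i ≠ j`.
Then `∑ᵢ P(Xᵢ = 0) ≥ n − 2`. -/
theorem stmt_11 {Ω : Type*} [MeasurableSpace Ω] (μ : Measure Ω) [IsProbabilityMeasure μ]
    (n : ℕ) (hn : 3 < n)
    (X : Ω → Bool) (hX : Measurable X) (hunif : μ {ω | X ω = true} = 1/2)
    (Xe : Fin n → Ω → Option Bool) (hXe : ∀ i, Measurable (Xe i))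
    (herased : ∀ i, μ {ω | Xe i ω = some true ∧ X ω = false} = 0 ∧
      μ {ω | Xe i ω = some false ∧ X ω = true} = 0)
    (hindep : ∀ i j, i ≠ j →
      entropy μ (Xe i) + entropy μ (Xe j) - entropy μ (fun ω => (Xe i ω, Xe j ω)) = 0) :
    (n : ℝ) - 2 ≤ ∑ i, (μ {ω | Xe i ω = none}).toReal :=
  stmt_11_general μ n X hX hunif Xe hXe herased hindep
end

section
/- Let n ≥ k ≥ 1 and m ≤ k/2 with m dividing n. Partition n messages into n/m disjoint groups of m. If every k of the n messages are mutually independent (I_k of every k-subset equals 0) under an i.i.d. uniform binary source, and each group reconstruction X_{M_i}^l is an erased version of the source, then the worst-case m-message erasure distortion satisfies D_m ≥ 1 − m/n. -/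
open MeasureTheory ENNReal

/-- The erasure distortion measure: `0` for a correct symbol, `1` for an erasure
(`none`), and `∞` for an error. -/
noncomputable def erasureDist (x : Bool) (y : Option Bool) : ℝ≥0∞ :=
  match y with
  | none => 1
  | some b => if b = x then 0 else ⊤

/-!
Zero multi-information of `k` messages is the equality case of Gibbs' inequality for their joint
law against the product of the marginals, so under the uniform source any values the messages can
take one at a time are taken simultaneously by a single source string. Two groups of `m ≤ k/2`
messages fit inside `k` messages, so two different group reconstructions can be steered
independently; as both are erased versions of the source, they never reveal conflicting bits at
the same position. Let the source be `false` exactly where some reconstruction could ever reveal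
`true`: then each position is revealed by at most one group, so one of the `n/m` groups reveals at
most `l·m/n` positions and erases all the others.
-/

open Finset

open Real InformationTheory in
theorem eq_of_sum_mul_log_eq {ι : Type*} [Fintype ι] {p q : ι → ℝ}
    (hp : ∀ a, 0 ≤ p a) (hq : ∀ a, 0 ≤ q a) (hpq : ∀ a, q a = 0 → p a = 0)
    (hp1 : ∑ a, p a = 1) (hq1 : ∑ a, q a = 1)
    (h : ∑ a, p a * log (p a) = ∑ a, p a * log (q a)) : p = q := by
  have hterm : ∀ a,
      q a * klFun (p a / q a) = p a * log (p a) - p a * log (q a) + q a - p a := by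
    intro a
    by_cases hqa : q a = 0
    · simp [hqa, hpq a hqa]
    by_cases hpa : p a = 0
    · simp [hpa, klFun_zero]
    rw [klFun_apply, log_div hpa hqa]
    field_simp
  have hsum : ∑ a, q a * klFun (p a / q a) = 0 := by
    simp only [hterm, Finset.sum_add_distrib, Finset.sum_sub_distrib, h, hp1, hq1]
    ring
  have hnonneg : ∀ a ∈ Finset.univ, 0 ≤ q a * klFun (p a / q a) := fun a _ =>
    mul_nonneg (hq a) (klFun_nonneg (div_nonneg (hp a) (hq a)))
  funext a
  have hzero := (Finset.sum_eq_zero_iff_of_nonneg hnonneg).mp hsum a (Finset.mem_univ a)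
  by_cases hqa : q a = 0
  · rw [hqa, hpq a hqa]
  rw [mul_eq_zero, or_iff_right hqa, klFun_eq_zero_iff (div_nonneg (hp a) (hq a)),
    div_eq_one_iff_eq hqa] at hzero
  exact hzero

section Entropy

variable {Ω : Type*} [MeasurableSpace Ω] [DiscreteMeasurableSpace Ω] (μ : Measure Ω)

theorem sum_measureReal_preimage_singleton_eq_one_s17 [IsProbabilityMeasure μ] {β : Type*}
    [Fintype β] (Y : Ω → β) : ∑ b, μ.real (Y ⁻¹' {b}) = 1 := by
  rw [sum_measureReal_preimage_singleton _ fun _ _ => .of_discrete]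
  simp

theorem measureReal_preimage_comp_singleton [IsFiniteMeasure μ] {α β : Type*} [Fintype α]
    [DecidableEq β] (T : Ω → α) (π : α → β) (b : β) :
    μ.real ((π ∘ T) ⁻¹' {b}) = ∑ a with π a = b, μ.real (T ⁻¹' {a}) := by
  rw [sum_measureReal_preimage_singleton _ fun _ _ => .of_discrete]
  congr 1
  ext ω
  simp

theorem entropy_comp [IsFiniteMeasure μ] {α β : Type*} [Fintype α] [Fintype β] (T : Ω → α)
    (π : α → β) :
    entropy μ (π ∘ T) =
      -∑ a, μ.real (T ⁻¹' {a}) * Real.logb 2 (μ.real ((π ∘ T) ⁻¹' {π a})) := by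
  classical
  rw [entropy, ← Finset.sum_fiberwise Finset.univ π]
  congr 1
  refine Finset.sum_congr rfl fun b _ => ?_
  calc (μ ((π ∘ T) ⁻¹' {b})).toReal * Real.logb 2 (μ ((π ∘ T) ⁻¹' {b})).toReal
      = (∑ a with π a = b, μ.real (T ⁻¹' {a})) *
          Real.logb 2 (μ.real ((π ∘ T) ⁻¹' {b})) := by
        rw [← measureReal_def]
        congr 1
        convert measureReal_preimage_comp_singleton μ T π b
    _ = _ := by
        rw [Finset.sum_mul]
        exact Finset.sum_congr rfl fun a ha => by rw [(Finset.mem_filter.mp ha).2]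

theorem measureReal_preimage_pi_eq_prod_of_sum_entropy_eq [IsProbabilityMeasure μ] {κ : Type*}
    [Fintype κ] [DecidableEq κ] {A : κ → Type*} [∀ j, Fintype (A j)] (X : ∀ j, Ω → A j)
    (h : ∑ j, entropy μ (X j) = entropy μ (fun ω j => X j ω)) (a : ∀ j, A j) :
    μ.real ((fun ω j => X j ω) ⁻¹' {a}) = ∏ j, μ.real (X j ⁻¹' {a j}) := by
  set T : Ω → ∀ j, A j := fun ω j => X j ω
  set p : (∀ j, A j) → ℝ := fun a => μ.real (T ⁻¹' {a})
  set Q : (∀ j, A j) → ℝ := fun a => ∏ j, μ.real (X j ⁻¹' {a j})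
  have hpQ : ∀ a, Q a = 0 → p a = 0 := by
    intro a hQa
    obtain ⟨j, -, hj⟩ := Finset.prod_eq_zero_iff.mp hQa
    exact measureReal_mono_null (fun ω hω => congrFun hω j) hj
  have hQ1 : ∑ a, Q a = 1 := by
    rw [← Fintype.prod_sum (fun j b => μ.real (X j ⁻¹' {b}))]
    simp only [sum_measureReal_preimage_singleton_eq_one_s17, Finset.prod_const_one]
  have hcross : ∑ j, entropy μ (X j) = -∑ a, p a * Real.logb 2 (Q a) := by
    simp only [show ∀ j, X j = Function.eval j ∘ T from fun j => rfl, entropy_comp,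
      Finset.sum_neg_distrib]
    rw [Finset.sum_comm]
    congr 1
    refine Finset.sum_congr rfl fun a _ => ?_
    by_cases hpa : p a = 0
    · simp [p, hpa]
    rw [← Finset.mul_sum, Real.logb_prod]
    · rfl
    · exact fun j _ hj => hpa (hpQ a (Finset.prod_eq_zero (Finset.mem_univ j) hj))
  have hlog : ∑ a, p a * Real.log (p a) = ∑ a, p a * Real.log (Q a) := by
    have hb : ∑ a, p a * Real.logb 2 (p a) = ∑ a, p a * Real.logb 2 (Q a) := by
      have : entropy μ T = -∑ a, p a * Real.logb 2 (p a) := rfl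
      linarith
    simp only [Real.logb, ← mul_div_assoc, ← Finset.sum_div] at hb
    exact (div_left_inj' (Real.log_pos one_lt_two).ne').mp hb
  exact congrFun (eq_of_sum_mul_log_eq (fun _ => measureReal_nonneg)
    (fun _ => Finset.prod_nonneg fun _ _ => measureReal_nonneg) hpQ
    (sum_measureReal_preimage_singleton_eq_one_s17 μ T) hQ1 hlog) a

end Entropy

theorem PMF.measureReal_uniformOfFintype_ne_zero_iff {Ω : Type*} [Fintype Ω] [Nonempty Ω]
    [MeasurableSpace Ω] [DiscreteMeasurableSpace Ω] (s : Set Ω) :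
    (PMF.uniformOfFintype Ω).toMeasure.real s ≠ 0 ↔ s.Nonempty := by
  rw [Ne, measureReal_eq_zero_iff, PMF.toMeasure_apply_eq_zero_iff _ .of_discrete,
    PMF.support_uniformOfFintype, top_disjoint, Set.nonempty_iff_ne_empty]
  rfl

theorem exists_forall_eq_of_sum_entropy_eq {Ω : Type*} [Fintype Ω] [Nonempty Ω]
    [MeasurableSpace Ω] [DiscreteMeasurableSpace Ω] {κ : Type*} [Fintype κ] [DecidableEq κ]
    {A : κ → Type*} [∀ j, Fintype (A j)] (X : ∀ j, Ω → A j)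
    (h : ∑ j, entropy (PMF.uniformOfFintype Ω).toMeasure (X j) =
      entropy (PMF.uniformOfFintype Ω).toMeasure (fun ω j => X j ω))
    (c : ∀ j, A j) (hc : ∀ j, ∃ ω, X j ω = c j) : ∃ ω, ∀ j, X j ω = c j := by
  have hjoint :
      (PMF.uniformOfFintype Ω).toMeasure.real ((fun ω j => X j ω) ⁻¹' {c}) ≠ 0 := by
    rw [measureReal_preimage_pi_eq_prod_of_sum_entropy_eq _ X h c]
    exact Finset.prod_ne_zero_iff.mpr fun j _ =>
      (PMF.measureReal_uniformOfFintype_ne_zero_iff _).mpr (hc j)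
  obtain ⟨ω, hω⟩ := (PMF.measureReal_uniformOfFintype_ne_zero_iff _).mp hjoint
  exact ⟨ω, congrFun hω⟩

theorem sum_erasureDist_eq_card {T : Type*} [Fintype T] (x : T → Bool) (y : T → Option Bool)
    (hy : ∀ t b, y t = some b → x t = b) :
    ∑ t, erasureDist (x t) (y t) = #{t | y t = none} := by
  rw [Finset.natCast_card_filter]
  refine Finset.sum_congr rfl fun t _ => ?_
  cases hyt : y t with
  | none => simp [erasureDist]
  | some b => simp [erasureDist, hy t b hyt]

theorem one_sub_div_le_inv_mul {m n l e r : ℕ} (hm : m ≠ 0) (hl : l ≠ 0) (hsum : e + r = l)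
    (h : r * n ≤ m * l) : 1 - (m : ℝ≥0∞) / n ≤ (l : ℝ≥0∞)⁻¹ * e := by
  have hl0 : (l : ℝ≥0∞) ≠ 0 := by exact_mod_cast hl
  have hr : (l : ℝ≥0∞)⁻¹ * r ≤ m / n := by
    rw [← ENNReal.div_eq_inv_mul, ENNReal.le_div_iff_mul_le (by simp [hm]) (by simp), mul_comm,
      ← mul_div_assoc, ENNReal.div_le_iff hl0 (by simp), mul_comm]
    exact_mod_cast h
  rw [tsub_le_iff_right]
  calc (1 : ℝ≥0∞) = (l : ℝ≥0∞)⁻¹ * e + (l : ℝ≥0∞)⁻¹ * r := by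
        rw [← mul_add, ← Nat.cast_add, hsum, ENNReal.inv_mul_cancel hl0 (by simp)]
    _ ≤ _ := by gcongr

section Erasure

variable {γ T : Type*} (g : γ → (T → Bool) → T → Option Bool)

open Classical in
noncomputable def adversary : T → Bool := fun t => !decide (∃ G x, g G x t = some true)

variable {g}

theorem eq_of_reveal_of_reveal (herased : ∀ G x t b, g G x t = some b → x t = b)
    (hcompat : ∀ G G', G ≠ G' → ∀ x y, ∃ z, g G z = g G x ∧ g G' z = g G' y)
    {G G' : γ} {x y : T → Bool} {t : T} {v w : Bool} (hG : G ≠ G')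
    (hv : g G x t = some v) (hw : g G' y t = some w) : v = w := by
  obtain ⟨z, hzG, hzG'⟩ := hcompat G G' hG x y
  rw [← herased G z t v (hzG ▸ hv), herased G' z t w (hzG' ▸ hw)]

theorem eq_of_reveal_adversary (herased : ∀ G x t b, g G x t = some b → x t = b)
    (hcompat : ∀ G G', G ≠ G' → ∀ x y, ∃ z, g G z = g G x ∧ g G' z = g G' y)
    {G₁ G₂ : γ} {t : T} (h₁ : g G₁ (adversary g) t ≠ none)
    (h₂ : g G₂ (adversary g) t ≠ none) : G₁ = G₂ := by
  obtain ⟨b₁, hb₁⟩ := Option.ne_none_iff_exists'.mp h₁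
  have hP : ∃ G x, g G x t = some true := by
    by_contra hP
    have htrue : adversary g t = true := by simp [adversary, hP]
    rw [herased G₁ _ t b₁ hb₁] at htrue
    exact hP ⟨G₁, _, htrue ▸ hb₁⟩
  obtain ⟨G₀, x₀, h₀⟩ := hP
  have hfalse : adversary g t = false := by simpa [adversary] using ⟨G₀, x₀, h₀⟩
  have hG₀ : ∀ G, g G (adversary g) t ≠ none → G = G₀ := by
    intro G hG
    obtain ⟨b, hb⟩ := Option.ne_none_iff_exists'.mp hG
    by_contra hne
    have hbt : b = true := eq_of_reveal_of_reveal herased hcompat hne hb h₀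
    have hbf : b = false := (herased G _ t b hb).symm.trans hfalse
    exact absurd (hbt.symm.trans hbf) (by decide)
  exact (hG₀ G₁ h₁).trans (hG₀ G₂ h₂).symm

theorem sum_card_reveal_adversary_le [Fintype γ] [Fintype T]
    (herased : ∀ G x t b, g G x t = some b → x t = b)
    (hcompat : ∀ G G', G ≠ G' → ∀ x y, ∃ z, g G z = g G x ∧ g G' z = g G' y) :
    ∑ G, #{t | g G (adversary g) t ≠ none} ≤ Fintype.card T := by
  classical
  rw [← Finset.card_biUnion]
  · exact Finset.card_le_univ _
  · intro G₁ _ G₂ _ hne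
    exact Finset.disjoint_filter.mpr fun t _ h₁ h₂ =>
      hne (eq_of_reveal_adversary herased hcompat h₁ h₂)

theorem exists_card_mul_card_reveal_adversary_le [Fintype γ] [Nonempty γ] [Fintype T]
    (herased : ∀ G x t b, g G x t = some b → x t = b)
    (hcompat : ∀ G G', G ≠ G' → ∀ x y, ∃ z, g G z = g G x ∧ g G' z = g G' y) :
    ∃ G, Fintype.card γ * #{t | g G (adversary g) t ≠ none} ≤ Fintype.card T := by
  obtain ⟨G, -, hG⟩ := Finset.exists_le_of_sum_le Finset.univ_nonempty
    (f := fun G => Fintype.card γ * #{t | g G (adversary g) t ≠ none})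
    (g := fun _ => Fintype.card T) (by
      simp only [← Finset.mul_sum, Finset.sum_const, Finset.card_univ, smul_eq_mul]
      exact Nat.mul_le_mul_left _ (sum_card_reveal_adversary_le herased hcompat))
  exact ⟨G, hG⟩

end Erasure

theorem exists_agree_on_disjoint_of_kwise_sum_entropy_eq {Ω : Type*} [Fintype Ω] [Nonempty Ω]
    [MeasurableSpace Ω] [DiscreteMeasurableSpace Ω] {ι : Type*} [Fintype ι]
    {F : ι → Type*} [∀ i, Fintype (F i)] (f : ∀ i, Ω → F i) {k : ℕ}
    (hk : k ≤ Fintype.card ι)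
    (hindep : ∀ s : Fin k → ι, Function.Injective s →
      ∑ j, entropy (PMF.uniformOfFintype Ω).toMeasure (f (s j)) =
        entropy (PMF.uniformOfFintype Ω).toMeasure (fun ω j => f (s j) ω))
    {S₁ S₂ : Finset ι} (hdisj : Disjoint S₁ S₂) (hcard : #S₁ + #S₂ ≤ k) (x y : Ω) :
    ∃ z, (∀ i ∈ S₁, f i z = f i x) ∧ (∀ i ∈ S₂, f i z = f i y) := by
  classical
  obtain ⟨K, hK, hKk⟩ := Finset.exists_superset_card_eq
    ((Finset.card_union_of_disjoint hdisj).trans_le hcard) (by simpa using hk)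
  have e : Fin k ≃ K := (K.equivFinOfCardEq hKk).symm
  let c : ∀ i, F i := fun i => if i ∈ S₁ then f i x else f i y
  obtain ⟨z, hz⟩ := exists_forall_eq_of_sum_entropy_eq (fun j => f (e j))
    (hindep _ (Subtype.val_injective.comp e.injective)) (fun j => c (e j))
    (fun j => by by_cases h : (e j : ι) ∈ S₁ <;> simp [c, h])
  have hzc : ∀ i ∈ K, f i z = c i := fun i hi => by
    obtain ⟨j, rfl⟩ : ∃ j, (e j : ι) = i := ⟨e.symm ⟨i, hi⟩, by simp⟩
    exact hz j
  refine ⟨z, fun i hi => ?_, fun i hi => ?_⟩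
  · simpa [c, hi] using hzc i (hK (Finset.mem_union_left _ hi))
  · simpa [c, Finset.disjoint_right.mp hdisj hi] using
      hzc i (hK (Finset.mem_union_right _ hi))

theorem stmt_17_general (n k m l : ℕ) (hkn : k ≤ n) (hm : 1 ≤ m)
    (hmk : 2 * m ≤ k) (hdvd : m ∣ n) (hl : 1 ≤ l)
    (F : Fin n → Type) [∀ i, Fintype (F i)]
    (f : (i : Fin n) → (Fin l → Bool) → F i)
    (grp : Fin n → Fin (n / m))
    (hgrp : ∀ G, (Finset.univ.filter (fun i => grp i = G)).card = m)
    (g : Fin (n / m) → (Fin l → Bool) → (Fin l → Option Bool))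
    (hfact : ∀ G x y, (∀ i, grp i = G → f i x = f i y) → g G x = g G y)
    (herased : ∀ G x t b, g G x t = some b → x t = b)
    (hindep : ∀ s : Fin k → Fin n, Function.Injective s →
      (∑ j, entropy (PMF.uniformOfFintype (Fin l → Bool)).toMeasure
          (fun x => f (s j) x))
        - entropy (PMF.uniformOfFintype (Fin l → Bool)).toMeasure
            (fun x j => f (s j) x) = 0) :
    ∃ G, ∃ x : Fin l → Bool,
      1 - (m : ℝ≥0∞)/n ≤ (l : ℝ≥0∞)⁻¹ * ∑ t, erasureDist (x t) (g G x t) := by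
  have hcompat : ∀ G G', G ≠ G' → ∀ x y, ∃ z, g G z = g G x ∧ g G' z = g G' y := by
    intro G G' hG x y
    obtain ⟨z, hzx, hzy⟩ := exists_agree_on_disjoint_of_kwise_sum_entropy_eq f
      (S₁ := {i | grp i = G}) (S₂ := {i | grp i = G'}) (by simpa using hkn)
      (fun s hs => sub_eq_zero.mp (hindep s hs))
      (Finset.disjoint_filter.mpr fun i _ hi hi' => hG (hi.symm.trans hi'))
      (by simp only [hgrp]; omega) x y
    exact ⟨z, hfact G z x fun i hi => hzx i (by simp [hi]),
      hfact G' z y fun i hi => hzy i (by simp [hi])⟩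
  have : Nonempty (Fin (n / m)) := ⟨⟨0, Nat.div_pos (by omega) hm⟩⟩
  obtain ⟨G, hG⟩ := exists_card_mul_card_reveal_adversary_le herased hcompat
  rw [Fintype.card_fin, Fintype.card_fin] at hG
  have hsplit : #{t | g G (adversary g) t = none} + #{t | g G (adversary g) t ≠ none} = l := by
    simpa using Finset.card_filter_add_card_filter_not (s := Finset.univ)
      (fun t => g G (adversary g) t = none)
  have hrevealed : #{t | g G (adversary g) t ≠ none} * n ≤ m * l :=
    calc #{t | g G (adversary g) t ≠ none} * n
        = n / m * #{t | g G (adversary g) t ≠ none} * m := by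
          rw [mul_comm (n / m), mul_assoc, Nat.div_mul_cancel hdvd]
      _ ≤ m * l := by rw [mul_comm _ m]; exact Nat.mul_le_mul_left m hG
  refine ⟨G, adversary g, ?_⟩
  rw [sum_erasureDist_eq_card _ _ (herased G _)]
  exact one_sub_div_le_inv_mul (by omega) (by omega) hsplit hrevealed

/-- Theorem 8: with `m ≤ k/2` and `m ∣ n`, partition the `n` messages into `n/m`
disjoint groups of size `m` (the fibers of `grp`).  If every `k` of the `n` messages
`f i` are mutually independent under the i.i.d. uniform binary source (multi-letter
mutual information zero), and each group reconstruction `g G` is a function of the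
messages in group `G` producing an erased version of the source string, then some group
reconstruction suffers worst-case erasure distortion at least `1 − m/n`; hence
`D_m ≥ 1 − m/n`. -/
theorem stmt_17 (n k m l : ℕ) (hk : 1 ≤ k) (hkn : k ≤ n) (hm : 1 ≤ m)
    (hmk : 2 * m ≤ k) (hdvd : m ∣ n) (hl : 1 ≤ l)
    (F : Fin n → Type) [∀ i, Fintype (F i)]
    (f : (i : Fin n) → (Fin l → Bool) → F i)
    (grp : Fin n → Fin (n / m))
    (hgrp : ∀ G, (Finset.univ.filter (fun i => grp i = G)).card = m)
    (g : Fin (n / m) → (Fin l → Bool) → (Fin l → Option Bool))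
    (hfact : ∀ G x y, (∀ i, grp i = G → f i x = f i y) → g G x = g G y)
    (herased : ∀ G x t b, g G x t = some b → x t = b)
    (hindep : ∀ s : Fin k → Fin n, Function.Injective s →
      (∑ j, entropy (PMF.uniformOfFintype (Fin l → Bool)).toMeasure
          (fun x => f (s j) x))
        - entropy (PMF.uniformOfFintype (Fin l → Bool)).toMeasure
            (fun x j => f (s j) x) = 0) :
    ∃ G, ∃ x : Fin l → Bool,
      1 - (m : ℝ≥0∞)/n ≤ (l : ℝ≥0∞)⁻¹ * ∑ t, erasureDist (x t) (g G x t) :=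
  stmt_17_general n k m l hkn hm hmk hdvd hl F f grp hgrp g hfact herased hindep
end
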